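/- For n ≥ 6, in the graph Γ_n there is exactly one 4-cycle passing through the edge from (0,1) to (0,2), namely the cycle (0,1), (0,2), (0,3), (0,4), (0,1). -/

import Mathlib

/-- The 4-Cayley graph `Γ` of `H = (ℤ/2)^m` (with `m = n - 2`): vertices are the
four copies `H × {0,1,2,3}` of `H`, with `(h,i)` adjacent to `(g,j)` iff
`g - h ∈ T i j`, for the connection sets of Definition 3.2 of the paper
(the paper's labels `1,2,3,4` correspond to `0,1,2,3` here, and `aₖ` is the
`k`-th standard basis vector, 0-indexed). -/
def gammaGraph (m : ℕ) (hm : 4 ≤ m) : SimpleGraph ((Fin m → ZMod 2) × Fin 4) :=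
  SimpleGraph.fromRel (fun p q =>
    (p.2 = 0 ∧ q.2 = 0 ∧ ∃ i : Fin m, q.1 - p.1 = Pi.single i 1) ∨
    (p.2 = 1 ∧ q.2 = 1 ∧
      ((∃ i : Fin m, ∃ h : i.val + 3 ≤ m,
          q.1 - p.1 = Pi.single i 1 + Pi.single (⟨i.val + 2, by omega⟩ : Fin m) 1) ∨
        q.1 - p.1 = Pi.single (⟨m - 2, by omega⟩ : Fin m) 1 +
          Pi.single (⟨m - 1, by omega⟩ : Fin m) 1)) ∨
    (p.2 = 2 ∧ q.2 = 2 ∧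
      ((∃ i : Fin m, ∃ h : i.val + 3 ≤ m,
          q.1 - p.1 = Pi.single i 1 + Pi.single (⟨i.val + 1, by omega⟩ : Fin m) 1 +
            Pi.single (⟨i.val + 2, by omega⟩ : Fin m) 1) ∨
        q.1 - p.1 = Pi.single (⟨m - 2, by omega⟩ : Fin m) 1 +
          Pi.single (⟨m - 1, by omega⟩ : Fin m) 1)) ∨
    (p.2 = 3 ∧ q.2 = 3 ∧
      ((∃ i : Fin m, ∃ h : i.val + 3 ≤ m,
          q.1 - p.1 = Pi.single i 1 + Pi.single (⟨i.val + 1, by omega⟩ : Fin m) 1) ∨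
        q.1 - p.1 = Pi.single (⟨m - 2, by omega⟩ : Fin m) 1 ∨
        q.1 - p.1 = Pi.single (⟨m - 1, by omega⟩ : Fin m) 1)) ∨
    (p.2 = 0 ∧ q.2 = 1 ∧ q.1 = p.1) ∨
    (p.2 = 0 ∧ q.2 = 3 ∧ q.1 = p.1) ∨
    (p.2 = 2 ∧ q.2 = 3 ∧ q.1 = p.1) ∨
    (p.2 = 1 ∧ q.2 = 2 ∧
      (q.1 = p.1 ∨ q.1 - p.1 = Pi.single (⟨m - 1, by omega⟩ : Fin m) 1)))

/-- `C` is (the edge set of) a 4-cycle in the graph `G`: there are four distinct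
vertices `a, b, c, d`, consecutively adjacent, whose four cycle edges make up `C`. -/
def IsFourCycle {V : Type*} (G : SimpleGraph V) (C : Set (Sym2 V)) : Prop :=
  ∃ a b c d : V, a ≠ b ∧ a ≠ c ∧ a ≠ d ∧ b ≠ c ∧ b ≠ d ∧ c ≠ d ∧
    G.Adj a b ∧ G.Adj b c ∧ G.Adj c d ∧ G.Adj d a ∧
    C = {s(a, b), s(b, c), s(c, d), s(d, a)}

/-!
A neighbour of `(0,0)` other than `(0,1)` is `(aᵢ,0)` or `(0,3)`, and a neighbour of `(0,1)` other
than `(0,0)` is `(aₖ + aₖ',1)` with `k ≠ k'`, `(0,2)` or `(a_{m-1},2)`. Of these, only `(0,3)` and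
`(0,2)` are adjacent: layers `0,2` and `1,3` are never joined, edges between layers `0,1` and
between layers `2,3` keep the group element, and `aᵢ ≠ aₖ + aₖ'`. So a 4-cycle through the edge
`(0,0)(0,1)` has its other two vertices forced.
-/

theorem IsFourCycle.exists_of_mem {V : Type*} {G : SimpleGraph V} {C : Set (Sym2 V)}
    (hC : IsFourCycle G C) {u v : V} (huv : s(u, v) ∈ C) :
    ∃ c d, u ≠ c ∧ v ≠ d ∧ G.Adj v c ∧ G.Adj c d ∧ G.Adj d u ∧
      C = {s(u, v), s(v, c), s(c, d), s(d, u)} := by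
  obtain ⟨a, b, c, d, -, hac, -, -, hbd, -, h₁, h₂, h₃, h₄, rfl⟩ := hC
  simp only [Set.mem_insert_iff, Set.mem_singleton_iff, Sym2.eq_iff] at huv
  rcases huv with (⟨hu, hv⟩ | ⟨hu, hv⟩) | (⟨hu, hv⟩ | ⟨hu, hv⟩) |
      (⟨hu, hv⟩ | ⟨hu, hv⟩) | (⟨hu, hv⟩ | ⟨hu, hv⟩) <;> subst u v
  · exact ⟨c, d, hac, hbd, h₂, h₃, h₄, rfl⟩
  · refine ⟨d, c, hbd, hac, h₄.symm, h₃.symm, h₂.symm, ?_⟩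
    ext; simp only [Set.mem_insert_iff, Set.mem_singleton_iff, Sym2.eq_swap]; tauto
  · refine ⟨d, a, hbd, hac.symm, h₃, h₄, h₁, ?_⟩
    ext; simp only [Set.mem_insert_iff, Set.mem_singleton_iff, Sym2.eq_swap]; tauto
  · refine ⟨a, d, hac.symm, hbd, h₁.symm, h₄.symm, h₃.symm, ?_⟩
    ext; simp only [Set.mem_insert_iff, Set.mem_singleton_iff, Sym2.eq_swap]; tauto
  · refine ⟨a, b, hac.symm, hbd.symm, h₄, h₁, h₂, ?_⟩
    ext; simp only [Set.mem_insert_iff, Set.mem_singleton_iff, Sym2.eq_swap]; tauto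
  · refine ⟨b, a, hbd.symm, hac.symm, h₂.symm, h₁.symm, h₄.symm, ?_⟩
    ext; simp only [Set.mem_insert_iff, Set.mem_singleton_iff, Sym2.eq_swap]; tauto
  · refine ⟨b, c, hbd.symm, hac, h₁, h₂, h₃, ?_⟩
    ext; simp only [Set.mem_insert_iff, Set.mem_singleton_iff, Sym2.eq_swap]; tauto
  · refine ⟨c, b, hac, hbd.symm, h₃.symm, h₂.symm, h₁.symm, ?_⟩
    ext; simp only [Set.mem_insert_iff, Set.mem_singleton_iff, Sym2.eq_swap]; tauto

theorem Pi.single_ne_single_add_single {ι M : Type*} [DecidableEq ι] [AddZeroClass M] {x : M}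
    (hx : x ≠ 0) (i : ι) {k k' : ι} (hk : k ≠ k') :
    (Pi.single i x : ι → M) ≠ Pi.single k x + Pi.single k' x := by
  intro h
  by_cases hi : i = k
  · subst hi
    simpa [hk.symm, hx.symm] using congrFun h k'
  · simpa [hi, hk, hx.symm] using congrFun h k

theorem ZMod.pi_neg_eq_self {ι : Type*} (x : ι → ZMod 2) : -x = x :=
  funext fun i => ZMod.neg_eq_self_mod_two (x i)

namespace gammaGraph

variable {m : ℕ} (hm : 4 ≤ m)

theorem not_adj_layer_zero_two (g h : Fin m → ZMod 2) :
    ¬ (gammaGraph m hm).Adj (g, 0) (h, 2) := by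
  simp [gammaGraph]

theorem not_adj_layer_one_three (g h : Fin m → ZMod 2) :
    ¬ (gammaGraph m hm).Adj (g, 1) (h, 3) := by
  simp [gammaGraph]

theorem eq_of_adj_layer_zero_one {g h : Fin m → ZMod 2}
    (H : (gammaGraph m hm).Adj (g, 0) (h, 1)) : h = g := by
  simpa [gammaGraph] using H

theorem eq_of_adj_layer_two_three {g h : Fin m → ZMod 2}
    (H : (gammaGraph m hm).Adj (g, 2) (h, 3)) : h = g := by
  simpa [gammaGraph] using H

theorem adj_zero_zero_cases {x : (Fin m → ZMod 2) × Fin 4} (H : (gammaGraph m hm).Adj (0, 0) x) :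
    (∃ i, x = (Pi.single i 1, 0)) ∨ x = (0, 1) ∨ x = (0, 3) := by
  obtain ⟨h, j⟩ := x
  fin_cases j <;> simp [gammaGraph, ZMod.pi_neg_eq_self] at H ⊢ <;> tauto

theorem adj_zero_one_cases {y : (Fin m → ZMod 2) × Fin 4} (H : (gammaGraph m hm).Adj (0, 1) y) :
    y = (0, 0) ∨ (∃ k k', k ≠ k' ∧ y = (Pi.single k 1 + Pi.single k' 1, 1)) ∨ y = (0, 2) ∨
      y = (Pi.single ⟨m - 1, by omega⟩ 1, 2) := by
  obtain ⟨h, j⟩ := y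
  fin_cases j <;> simp [gammaGraph, ZMod.pi_neg_eq_self] at H ⊢
  · exact H.symm
  · rcases H.2 with ⟨i, -, rfl⟩ | rfl
    · exact ⟨i, _, Fin.ne_of_val_ne (by simp), rfl⟩
    · exact ⟨_, _, Fin.ne_of_val_ne (by simp; omega), rfl⟩
  · exact H

theorem eq_and_eq_of_adj_of_adj_of_adj {x y : (Fin m → ZMod 2) × Fin 4}
    (hx : (gammaGraph m hm).Adj (0, 0) x) (hxy : (gammaGraph m hm).Adj x y)
    (hy : (gammaGraph m hm).Adj y (0, 1)) (hx₁ : x ≠ (0, 1)) (hy₀ : y ≠ (0, 0)) :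
    x = (0, 3) ∧ y = (0, 2) := by
  rcases adj_zero_zero_cases hm hx with ⟨i, rfl⟩ | rfl | rfl
  · rcases adj_zero_one_cases hm hy.symm with rfl | ⟨k, k', hk, rfl⟩ | rfl | rfl
    · exact absurd rfl hy₀
    · exact absurd (eq_of_adj_layer_zero_one hm hxy).symm
        (Pi.single_ne_single_add_single one_ne_zero i hk)
    · exact absurd hxy (not_adj_layer_zero_two hm _ _)
    · exact absurd hxy (not_adj_layer_zero_two hm _ _)
  · exact absurd rfl hx₁
  · rcases adj_zero_one_cases hm hy.symm with rfl | ⟨k, k', hk, rfl⟩ | rfl | rfl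
    · exact absurd rfl hy₀
    · exact absurd hxy.symm (not_adj_layer_one_three hm _ _)
    · exact ⟨rfl, rfl⟩
    · simpa [eq_comm] using eq_of_adj_layer_two_three hm hxy.symm

theorem isFourCycle_zero_layers : IsFourCycle (gammaGraph m hm)
    {s((0, 0), (0, 1)), s((0, 1), (0, 2)), s((0, 2), (0, 3)), s((0, 3), (0, 0))} :=
  ⟨(0, 0), (0, 1), (0, 2), (0, 3), by simp, by simp, by simp, by simp, by simp, by simp,
    by simp [gammaGraph], by simp [gammaGraph], by simp [gammaGraph], by simp [gammaGraph], rfl⟩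

end gammaGraph

/-- For `n ≥ 6`, there is exactly one 4-cycle of `Γ_n` through the edge from
`(0,1)` to `(0,2)` (labels `(0,0)`–`(0,1)` here), namely the cycle
`(0,1),(0,2),(0,3),(0,4)`. -/
theorem gamma_fourCycles_through_edge_12 (n : ℕ) (hn : 6 ≤ n) :
    {C : Set (Sym2 ((Fin (n - 2) → ZMod 2) × Fin 4)) |
        IsFourCycle (gammaGraph (n - 2) (by omega)) C ∧
        s(((0 : Fin (n - 2) → ZMod 2), (0 : Fin 4)), (0, 1)) ∈ C} =
      {{s(((0 : Fin (n - 2) → ZMod 2), (0 : Fin 4)), (0, 1)), s((0, 1), (0, 2)),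
        s((0, 2), (0, 3)), s((0, 3), (0, 0))}} := by
  have hm : 4 ≤ n - 2 := by omega
  refine Set.eq_singleton_iff_unique_mem.mpr
    ⟨⟨gammaGraph.isFourCycle_zero_layers hm, Set.mem_insert _ _⟩, ?_⟩
  rintro C ⟨hC, hmem⟩
  obtain ⟨c, d, hc, hd, hbc, hcd, hda, rfl⟩ := hC.exists_of_mem hmem
  obtain ⟨rfl, rfl⟩ :=
    gammaGraph.eq_and_eq_of_adj_of_adj_of_adj hm hda.symm hcd.symm hbc.symm hd.symm hc.symm
  rfl
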